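/- arXiv:1102.3165 — 2 statements merged into one kernel-verified Lean document; each statement's English description precedes it below -/
import Mathlib

section
/- Let w⁻, w⁺ > 0, v = (0, y, -z⁻) with z⁻ > 0, and for x ∈ ℝ let x̄ = (x, 0, z⁺) with z⁺ > 0. Define c(v,x) = inf over a ∈ {z = 0} of (w⁻·|v - a| + w⁺·|a - x̄|). Then c(v,·) : ℝ → ℝ is convex. More precisely, for any x₁ < x₀ < x₂ with 2x₀ = x₁ + x₂, the second finite difference c(v,x₁) - 2c(v,x₀) + c(v,x₂) is nonnegative (and strictly positive when w⁻ ≠ w⁺). -/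
/-- The point `(a, b, c)` of Euclidean 3-space. -/
noncomputable def pt3 (a b c : ℝ) : EuclideanSpace ℝ (Fin 3) := WithLp.toLp 2 ![a, b, c]

/-- The weighted distance function `c(v,x)` from `v = (0, y, -z⁻)` to `x̄ = (x, 0, z⁺)`,
obtained by minimizing `w⁻·|v - a| + w⁺·|a - x̄|` over bending points `a` in the plane
`F = {z = 0}`. -/
noncomputable def wdist (wm wp y zm zp : ℝ) (x : ℝ) : ℝ :=
  ⨅ a : ℝ × ℝ, (wm * dist (pt3 0 y (-zm)) (pt3 a.1 a.2 0)
    + wp * dist (pt3 a.1 a.2 0) (pt3 x 0 zp))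

/-!
The cost of the bent path is a weighted sum of norms of the two segment vectors, which depend
affinely on the endpoint abscissa `x` and the bending point `a`; `c(v, ·)` is the partial minimum
of this cost over `a`, and the minimum is attained by coercivity. Both segments cross the plane
`F`, so each segment vector ranges over an affine plane `{z = const ≠ 0}` missing the origin, on
which the Euclidean norm is strictly convex. Two distinct pairs `(x, a)` give distinct vectors
for at least one segment, so the cost is strictly convex in `(x, a)`, and a partial minimum of a
strictly convex function is strictly convex.
-/

open Set Filter

lemma strictConvexOn_norm_setOf_eq {V : Type*} [NormedAddCommGroup V] [NormedSpace ℝ V]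
    [StrictConvexSpace ℝ V] (φ : V →ₗ[ℝ] ℝ) {c : ℝ} (hc : c ≠ 0) :
    StrictConvexOn ℝ {u | φ u = c} (‖·‖) := by
  refine ⟨convex_hyperplane φ.isLinear c, fun u hu u' hu' hne t s ht hs _ ↦ ?_⟩
  change φ u = c at hu
  change φ u' = c at hu'
  have hu0 : ∀ {r : ℝ} {w : V}, 0 < r → φ w = c → r • w ≠ 0 := fun hr hw h0 ↦ by
    simpa [hw, hr.ne', hc] using congrArg φ h0
  have hray : ¬SameRay ℝ (t • u) (s • u') := fun h ↦ by
    obtain ⟨r₁, r₂, hr₁, hr₂, h⟩ := h.exists_pos (hu0 ht hu) (hu0 hs hu')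
    have hcoef : r₁ * t = r₂ * s := by
      simpa [smul_smul, hu, hu', hc] using congrArg φ h
    rw [smul_smul, smul_smul, hcoef] at h
    exact hne (smul_right_injective V (by positivity) h)
  calc ‖t • u + s • u'‖ < ‖t • u‖ + ‖s • u'‖ := norm_add_lt_of_not_sameRay hray
    _ = t • ‖u‖ + s • ‖u'‖ := by
      rw [norm_smul, norm_smul, Real.norm_of_nonneg ht.le, Real.norm_of_nonneg hs.le]; rfl

lemma strictConvexOn_iInf_of_exists_forall_le {E A : Type*} [AddCommGroup E] [Module ℝ E]
    [AddCommGroup A] [Module ℝ A] {F : E × A → ℝ} (hF : StrictConvexOn ℝ univ F)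
    (hmin : ∀ x, ∃ a, ∀ b, F (x, a) ≤ F (x, b)) :
    StrictConvexOn ℝ univ fun x ↦ ⨅ a, F (x, a) := by
  have hle (x : E) (a : A) : ⨅ b, F (x, b) ≤ F (x, a) :=
    let ⟨_, h⟩ := hmin x
    ciInf_le ⟨_, forall_mem_range.2 h⟩ a
  have heq (x : E) (a : A) (ha : ∀ b, F (x, a) ≤ F (x, b)) : ⨅ b, F (x, b) = F (x, a) :=
    (hle x a).antisymm (le_ciInf ha)
  refine ⟨convex_univ, fun x₁ _ x₂ _ hx t s ht hs hts ↦ ?_⟩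
  obtain ⟨a₁, ha₁⟩ := hmin x₁
  obtain ⟨a₂, ha₂⟩ := hmin x₂
  calc ⨅ b, F (t • x₁ + s • x₂, b) ≤ F (t • (x₁, a₁) + s • (x₂, a₂)) := hle _ _
    _ < t • F (x₁, a₁) + s • F (x₂, a₂) :=
      hF.2 trivial trivial (by simp [hx]) ht hs hts
    _ = t • (⨅ b, F (x₁, b)) + s • (⨅ b, F (x₂, b)) := by rw [heq x₁ a₁ ha₁, heq x₂ a₂ ha₂]

lemma pt3_injective {a b c a' b' c' : ℝ} (h : pt3 a b c = pt3 a' b' c') :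
    a = a' ∧ b = b' ∧ c = c' :=
  ⟨congrArg (· 0) h, congrArg (· 1) h, congrArg (· 2) h⟩

lemma pt3_sub (a b c a' b' c' : ℝ) :
    pt3 a b c - pt3 a' b' c' = pt3 (a - a') (b - b') (c - c') := by
  ext i; fin_cases i <;> rfl

lemma smul_pt3_add_smul_pt3 (t s a b c a' b' c' : ℝ) :
    t • pt3 a b c + s • pt3 a' b' c' = pt3 (t * a + s * a') (t * b + s * b') (t * c + s * c') := by
  ext i; fin_cases i <;> rfl

lemma norm_pt3 (a b c : ℝ) : ‖pt3 a b c‖ = √(a ^ 2 + b ^ 2 + c ^ 2) := by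
  simp [EuclideanSpace.norm_eq, Fin.sum_univ_three, pt3, add_assoc]

lemma continuous_pt3 : Continuous fun a : ℝ × ℝ ↦ pt3 a.1 a.2 0 := by
  unfold pt3; fun_prop

lemma norm_le_norm_pt3 (a : ℝ × ℝ) : ‖a‖ ≤ ‖pt3 a.1 a.2 0‖ := by
  rw [norm_pt3, Prod.norm_def, Real.norm_eq_abs, Real.norm_eq_abs]
  exact max_le (Real.abs_le_sqrt (by nlinarith)) (Real.abs_le_sqrt (by nlinarith))

section BendCost

variable (wm wp y zm zp : ℝ)

noncomputable def bendCost (p : ℝ × (ℝ × ℝ)) : ℝ :=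
  wm * dist (pt3 0 y (-zm)) (pt3 p.2.1 p.2.2 0) + wp * dist (pt3 p.2.1 p.2.2 0) (pt3 p.1 0 zp)

lemma bendCost_eq_norm (x : ℝ) (a : ℝ × ℝ) :
    bendCost wm wp y zm zp (x, a) =
      wm * ‖pt3 (-a.1) (y - a.2) (-zm)‖ + wp * ‖pt3 (a.1 - x) a.2 (-zp)‖ := by
  simp only [bendCost, dist_eq_norm, pt3_sub, zero_sub, sub_zero]

variable {wm wp}

lemma exists_forall_bendCost_le (hwm : 0 < wm) (hwp : 0 ≤ wp) (x : ℝ) :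
    ∃ a, ∀ b, bendCost wm wp y zm zp (x, a) ≤ bendCost wm wp y zm zp (x, b) := by
  have hcont : Continuous fun a ↦ bendCost wm wp y zm zp (x, a) := by
    simp only [bendCost]
    exact (continuous_const.mul (continuous_const.dist continuous_pt3)).add
      (continuous_const.mul (continuous_pt3.dist continuous_const))
  have hcoercive : ∀ a, wm * ‖a‖ - wm * ‖pt3 0 y (-zm)‖ ≤ bendCost wm wp y zm zp (x, a) := by
    intro a
    have hdist : ‖a‖ - ‖pt3 0 y (-zm)‖ ≤ dist (pt3 0 y (-zm)) (pt3 a.1 a.2 0) := by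
      rw [dist_comm, dist_eq_norm]
      linarith [norm_le_norm_pt3 a, norm_sub_norm_le (pt3 a.1 a.2 0) (pt3 0 y (-zm))]
    have : 0 ≤ wp * dist (pt3 a.1 a.2 0) (pt3 x 0 zp) := by positivity
    unfold bendCost
    linarith [mul_le_mul_of_nonneg_left hdist hwm.le, mul_sub wm ‖a‖ ‖pt3 0 y (-zm)‖]
  refine hcont.exists_forall_le (tendsto_atTop_mono hcoercive ?_)
  exact tendsto_atTop_add_const_right _ _ (tendsto_norm_cocompact_atTop.const_mul_atTop hwm)

lemma strictConvexOn_bendCost (hwm : 0 < wm) (hwp : 0 < wp) (hzm : 0 < zm) (hzp : 0 < zp) :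
    StrictConvexOn ℝ univ (bendCost wm wp y zm zp) := by
  have hnorm (c : ℝ) (hc : c < 0) := strictConvexOn_norm_setOf_eq
    (EuclideanSpace.proj (2 : Fin 3) : EuclideanSpace ℝ (Fin 3) →L[ℝ] ℝ).toLinearMap hc.ne
  refine ⟨convex_univ, fun ⟨x₁, a⟩ _ ⟨x₂, b⟩ _ hne t s ht hs hts ↦ ?_⟩
  have hseg (c : ℝ) (hc : c < 0) (u u' : EuclideanSpace ℝ (Fin 3)) (hu : u 2 = c)
      (hu' : u' 2 = c) : ‖t • u + s • u'‖ ≤ t * ‖u‖ + s * ‖u'‖ ∧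
        (u ≠ u' → ‖t • u + s • u'‖ < t * ‖u‖ + s * ‖u'‖) :=
    ⟨(hnorm c hc).convexOn.2 hu hu' ht.le hs.le hts, fun h ↦ (hnorm c hc).2 hu hu' h ht hs hts⟩
  have hP := hseg (-zm) (by linarith) (pt3 (-a.1) (y - a.2) (-zm)) (pt3 (-b.1) (y - b.2) (-zm))
    rfl rfl
  have hQ := hseg (-zp) (by linarith) (pt3 (a.1 - x₁) a.2 (-zp)) (pt3 (b.1 - x₂) b.2 (-zp))
    rfl rfl
  have hdiff : pt3 (-a.1) (y - a.2) (-zm) ≠ pt3 (-b.1) (y - b.2) (-zm) ∨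
      pt3 (a.1 - x₁) a.2 (-zp) ≠ pt3 (b.1 - x₂) b.2 (-zp) := by
    by_contra! h
    obtain ⟨⟨h₁, h₂, -⟩, ⟨h₃, -, -⟩⟩ := And.imp pt3_injective pt3_injective h
    exact hne (Prod.ext (by linarith) (Prod.ext (by linarith) (by linarith)))
  obtain rfl : s = 1 - t := by linarith
  have hmixP : pt3 (-(t • a + (1 - t) • b).1) (y - (t • a + (1 - t) • b).2) (-zm) =
      t • pt3 (-a.1) (y - a.2) (-zm) + (1 - t) • pt3 (-b.1) (y - b.2) (-zm) := by
    simp only [smul_pt3_add_smul_pt3, Prod.fst_add, Prod.snd_add, Prod.smul_fst, Prod.smul_snd,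
      smul_eq_mul]
    congr 1 <;> ring
  have hmixQ :
      pt3 ((t • a + (1 - t) • b).1 - (t * x₁ + (1 - t) * x₂)) (t • a + (1 - t) • b).2 (-zp) =
        t • pt3 (a.1 - x₁) a.2 (-zp) + (1 - t) • pt3 (b.1 - x₂) b.2 (-zp) := by
    simp only [smul_pt3_add_smul_pt3, Prod.fst_add, Prod.snd_add, Prod.smul_fst, Prod.smul_snd,
      smul_eq_mul]
    congr 1 <;> ring
  simp only [Prod.smul_mk, Prod.mk_add_mk, bendCost_eq_norm, smul_eq_mul, hmixP, hmixQ]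
  rcases hdiff with h | h
  · linarith [mul_lt_mul_of_pos_left (hP.2 h) hwm, mul_le_mul_of_nonneg_left hQ.1 hwp.le]
  · linarith [mul_le_mul_of_nonneg_left hP.1 hwm.le, mul_lt_mul_of_pos_left (hQ.2 h) hwp]

end BendCost

/-- The weighted distance function `x ↦ c(v,x)` is convex; more precisely the second finite
difference over any triple of equidistant points is nonnegative, and strictly positive when
`w⁻ ≠ w⁺`. -/
theorem stmt_2 (wm wp y zm zp : ℝ) (hwm : 0 < wm) (hwp : 0 < wp)
    (hzm : 0 < zm) (hzp : 0 < zp) :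
    ConvexOn ℝ Set.univ (wdist wm wp y zm zp) ∧
    ∀ x₁ x₀ x₂ : ℝ, x₁ < x₀ → x₀ < x₂ → 2 * x₀ = x₁ + x₂ →
      (0 ≤ wdist wm wp y zm zp x₁ - 2 * wdist wm wp y zm zp x₀ + wdist wm wp y zm zp x₂ ∧
        (wm ≠ wp →
          0 < wdist wm wp y zm zp x₁ - 2 * wdist wm wp y zm zp x₀ + wdist wm wp y zm zp x₂)) := by
  have hstrict : StrictConvexOn ℝ univ (wdist wm wp y zm zp) :=
    strictConvexOn_iInf_of_exists_forall_le (strictConvexOn_bendCost y zm zp hwm hwp hzm hzp)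
      (exists_forall_bendCost_le y zm zp hwm hwp.le)
  refine ⟨hstrict.convexOn, fun x₁ x₀ x₂ h₁ h₂ h₀ ↦ ?_⟩
  have hmid := hstrict.2 (mem_univ x₁) (mem_univ x₂) (by linarith) one_half_pos one_half_pos
    (add_halves 1)
  have hx₀ : (1 / 2 : ℝ) • x₁ + (1 / 2 : ℝ) • x₂ = x₀ := by simp only [smul_eq_mul]; linarith
  rw [hx₀, smul_eq_mul, smul_eq_mul] at hmid
  exact ⟨by linarith, fun _ ↦ by linarith⟩
end

section
/- Let w⁻ > w⁺ > 0 and let φ* ∈ (0, π/2) satisfy sin φ* = w⁺/w⁻. Let c(v,x) be the weighted distance function from v = (0, y, -z⁻) to (x, 0, z⁺) across the weighted plane F = {z = 0}, i.e. c(v,x) = inf over a ∈ F of (w⁻·|v-a| + w⁺·|a-(x,0,z⁺)|). Then c(v,x) - w⁺·(z⁻·cot φ* + x) → 0 as x → +∞. -/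
/-!
With `s = sin φ*`, `c = cos φ*` we have `w⁻ s = w⁺`. For a bending point `a = (a₁, a₂, 0)`,
Cauchy–Schwarz gives `|v - a| ≥ √(a₁² + z⁻²) ≥ s a₁ + c z⁻`, and `|a - x̄| ≥ x - a₁`, so every
path costs at least `w⁺ a₁ + w⁺ z⁻ cot φ* + w⁺ (x - a₁) = w⁺ (z⁻ cot φ* + x)`. Conversely, the
path leaving `v` at the critical angle bends at `(t, y, 0)` with `t = z⁻ tan φ*` and costs
`w⁺ (z⁻ cot φ* + t) + w⁺ √((x - t)² + y² + z⁺²)`, which exceeds the lower bound by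
`w⁺ (√((x - t)² + y² + z⁺²) - (x - t)) → 0`.
-/

open Real Filter Topology

lemma dist_pt3 (a b c d e f : ℝ) :
    dist (pt3 a b c) (pt3 d e f) = √((a - d) ^ 2 + (b - e) ^ 2 + (c - f) ^ 2) := by
  simp [pt3, EuclideanSpace.dist_eq, Fin.sum_univ_three, Real.dist_eq, sq_abs]

lemma sin_mul_add_cos_mul_le_sqrt (φ a b : ℝ) : sin φ * a + cos φ * b ≤ √(a ^ 2 + b ^ 2) :=
  le_sqrt_of_sq_le <| by
    nlinarith [sin_sq_add_cos_sq φ, sq_nonneg (cos φ * a - sin φ * b)]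

lemma tendsto_sqrt_sq_add_sub_atTop {C : ℝ} (hC : 0 ≤ C) :
    Tendsto (fun x => √(x ^ 2 + C) - x) atTop (𝓝 0) := by
  have hdiv : Tendsto (fun x : ℝ => C / x) atTop (𝓝 0) :=
    tendsto_const_nhds.div_atTop tendsto_id
  refine tendsto_of_tendsto_of_tendsto_of_le_of_le' tendsto_const_nhds hdiv ?_ ?_
  all_goals filter_upwards [eventually_gt_atTop (0 : ℝ)] with x hx
  · exact sub_nonneg.2 (le_sqrt_of_sq_le (by linarith))
  · have hsq : x ^ 2 + C ≤ (x + C / x) ^ 2 := by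
      have : (x + C / x) ^ 2 = x ^ 2 + 2 * C + (C / x) ^ 2 := by field_simp; ring
      nlinarith [sq_nonneg (C / x)]
    have := (sqrt_le_sqrt hsq).trans_eq (sqrt_sq (by positivity))
    linarith

section Refraction

variable {wm wp zm φ : ℝ} (y zp : ℝ)

lemma le_refraction_cost (hwp : 0 < wp) (hs : 0 < sin φ) (hsin : wm * sin φ = wp)
    (x a₁ a₂ : ℝ) :
    wp * (zm * (cos φ / sin φ) + x) ≤
      wm * dist (pt3 0 y (-zm)) (pt3 a₁ a₂ 0) + wp * dist (pt3 a₁ a₂ 0) (pt3 x 0 zp) := by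
  have hwm : 0 ≤ wm := (pos_of_mul_pos_left (hsin ▸ hwp) hs.le).le
  have hv : sin φ * a₁ + cos φ * zm ≤ dist (pt3 0 y (-zm)) (pt3 a₁ a₂ 0) := by
    rw [dist_pt3]
    refine (sin_mul_add_cos_mul_le_sqrt φ a₁ zm).trans (sqrt_le_sqrt ?_)
    nlinarith [sq_nonneg (y - a₂)]
  have hx : x - a₁ ≤ dist (pt3 a₁ a₂ 0) (pt3 x 0 zp) := by
    rw [dist_pt3]
    exact le_sqrt_of_sq_le (by nlinarith [sq_nonneg a₂, sq_nonneg zp])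
  have hcot : wm * cos φ = wp * (cos φ / sin φ) := by
    rw [← hsin]; field_simp [hs.ne']
  calc wp * (zm * (cos φ / sin φ) + x)
      = wm * (sin φ * a₁ + cos φ * zm) + wp * (x - a₁) := by
        linear_combination -a₁ * hsin - zm * hcot
    _ ≤ _ := by gcongr

lemma wdist_le (hwm : 0 ≤ wm) (hwp : 0 ≤ wp) (hzm : 0 ≤ zm) (hs : 0 < sin φ)
    (hc : 0 < cos φ) (hsin : wm * sin φ = wp) (x : ℝ) :
    wdist wm wp y zm zp x ≤ wp * (zm * (cos φ / sin φ) + zm * (sin φ / cos φ))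
      + wp * √((x - zm * (sin φ / cos φ)) ^ 2 + (y ^ 2 + zp ^ 2)) := by
  set t := zm * (sin φ / cos φ) with ht
  have hbdd : BddBelow (Set.range fun a : ℝ × ℝ =>
      wm * dist (pt3 0 y (-zm)) (pt3 a.1 a.2 0) + wp * dist (pt3 a.1 a.2 0) (pt3 x 0 zp)) :=
    ⟨0, by rintro _ ⟨a, rfl⟩; positivity⟩
  have hv : dist (pt3 0 y (-zm)) (pt3 t y 0) = zm / cos φ := by
    rw [dist_pt3, ← sqrt_sq (by positivity : 0 ≤ zm / cos φ)]
    congr 1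
    rw [ht]; field_simp [hc.ne']
    linear_combination zm ^ 2 * sin_sq_add_cos_sq φ
  have hx : dist (pt3 t y 0) (pt3 x 0 zp) = √((x - t) ^ 2 + (y ^ 2 + zp ^ 2)) := by
    rw [dist_pt3]; ring_nf
  have hcost : wm * (zm / cos φ) = wp * (zm * (cos φ / sin φ) + t) := by
    rw [ht, ← hsin]; field_simp [hs.ne', hc.ne']
    linear_combination -wm * zm * sin_sq_add_cos_sq φ
  calc wdist wm wp y zm zp x
      ≤ wm * dist (pt3 0 y (-zm)) (pt3 t y 0) + wp * dist (pt3 t y 0) (pt3 x 0 zp) :=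
        ciInf_le hbdd (t, y)
    _ = _ := by rw [hv, hx, hcost]

end Refraction

theorem stmt_3_general (wm wp y zm zp φ : ℝ) (hwp : 0 < wp)
    (hzm : 0 < zm)
    (hφ : φ ∈ Set.Ioo 0 (Real.pi / 2)) (hsin : Real.sin φ = wp / wm) :
    Filter.Tendsto
      (fun x => wdist wm wp y zm zp x - wp * (zm * (Real.cos φ / Real.sin φ) + x))
      Filter.atTop (nhds 0) := by
  have hs : 0 < sin φ := sin_pos_of_pos_of_lt_pi hφ.1 (by linarith [hφ.2, pi_pos])
  have hc : 0 < cos φ := cos_pos_of_mem_Ioo ⟨by linarith [hφ.1, pi_pos], hφ.2⟩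
  have hwm : 0 < wm := by
    rw [hsin] at hs; exact (div_pos_iff_of_pos_left hwp).1 hs
  have hms : wm * sin φ = wp := by rw [hsin]; field_simp
  set t := zm * (sin φ / cos φ)
  have hgap :
      Tendsto (fun x => wp * (√((x - t) ^ 2 + (y ^ 2 + zp ^ 2)) - (x - t))) atTop (𝓝 0) := by
    simpa [← sub_eq_add_neg] using ((tendsto_sqrt_sq_add_sub_atTop (by positivity)).comp
      (tendsto_atTop_add_const_right _ (-t) tendsto_id)).const_mul wp
  refine tendsto_of_tendsto_of_tendsto_of_le_of_le tendsto_const_nhds hgap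
    (fun x => ?_) (fun x => ?_)
  · exact sub_nonneg.2 (le_ciInf fun a => le_refraction_cost y zp hwp hs hms x a.1 a.2)
  · have := wdist_le y zp hwm.le hwp.le hzm.le hs hc hms x
    linarith

/-- If `w⁻ > w⁺ > 0` and `φ*` is the critical angle with `sin φ* = w⁺/w⁻`, then
`c(v,x) - w⁺·(z⁻·cot φ* + x) → 0` as `x → +∞`. -/
theorem stmt_3 (wm wp y zm zp φ : ℝ) (hwp : 0 < wp) (hw : wp < wm)
    (hzm : 0 < zm) (hzp : 0 < zp)
    (hφ : φ ∈ Set.Ioo 0 (Real.pi / 2)) (hsin : Real.sin φ = wp / wm) :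
    Filter.Tendsto
      (fun x => wdist wm wp y zm zp x - wp * (zm * (Real.cos φ / Real.sin φ) + x))
      Filter.atTop (nhds 0) :=
  stmt_3_general wm wp y zm zp φ hwp hzm hφ hsin
end
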